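/- If agent n's risk measure is ρ_n(X) = F_n*(−X) (the conjugate of a penalty F_n evaluated at −X) and the market maker's pricing rule is c = F₀*, then the negated market global objective −min_{X₁,…,X_N} [ c(Σ_n X_n) + Σ_n ρ_n(X_n) ] is a lower bound for the primal machine learning objective min_P Σ_{n=0}^N F_n(P), with equality when strong Fenchel duality holds (e.g., when all F_n are proper convex lsc on ℝ^K and a standard constraint qualification holds). -/

import Mathlib

/-!
Weak duality is the Fenchel–Young inequality `x ⬝ᵥ p - f p ≤ f* x`, summed over the agents at a
common point `P`. For strong duality, let `v` be the primal value and perturb the problem by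
`g (u, P) = F₀ P + ∑ₙ Fₙ₊₁ (P + uₙ)`, which is jointly convex with `g (0, ·) ≥ v`. Finite convex
functions on a finite-dimensional space are continuous, so `{(u, t) | ∃ P, g (u, P) < t}` is an open
convex set missing `(0, v)`, and separating them yields a linear `ℓ` with `v + ℓ u ≤ g (u, P)`.
Writing `ℓ u = ∑ₙ Yₙ ⬝ᵥ uₙ` and substituting `uₙ = qₙ - P` decouples this inequality into the bound
`-v` on the dual objective at `X = -Y`.
-/

/-- Legendre–Fenchel conjugate of a real-valued function on `ℝ^K`,
valued in the extended reals. -/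
noncomputable def fenchelConj {K : ℕ} (f : (Fin K → ℝ) → ℝ) (x : Fin K → ℝ) : EReal :=
  ⨆ p : Fin K → ℝ, (((∑ i, x i * p i - f p : ℝ) : EReal))

open Finset Set

namespace EReal

@[simp, norm_cast]
theorem coe_finsetSum {ι : Type*} (s : Finset ι) (f : ι → ℝ) :
    ((∑ i ∈ s, f i : ℝ) : EReal) = ∑ i ∈ s, (f i : EReal) :=
  map_sum (⟨⟨(↑), coe_zero⟩, coe_add⟩ : ℝ →+ EReal) f s

theorem iSup_add_le {ι : Sort*} {f : ι → EReal} {a b : EReal} (h : ∀ i, f i + a ≤ b) :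
    (⨆ i, f i) + a ≤ b :=
  add_le_of_forall_lt fun _ hx _ hy ↦
    let ⟨i, hi⟩ := lt_iSup_iff.1 hx
    (add_le_add hi.le hy.le).trans (h i)

theorem add_sum_iSup_le {ι κ : Type*} [Nonempty κ] (s : Finset ι) (f : ι → κ → EReal)
    {c r : EReal} (h : ∀ q : ι → κ, c + ∑ i ∈ s, f i (q i) ≤ r) :
    c + ∑ i ∈ s, ⨆ k, f i k ≤ r := by
  classical
  induction s using Finset.induction_on generalizing c with
  | empty => simpa using h fun _ ↦ Classical.arbitrary κ
  | insert a s ha ih =>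
    rw [sum_insert ha, add_left_comm]
    refine iSup_add_le fun k ↦ ?_
    rw [← add_assoc]
    refine ih fun q ↦ ?_
    have hq : ∀ i ∈ s, f i (Function.update q a k i) = f i (q i) := fun i hi ↦ by
      rw [Function.update_of_ne (ne_of_mem_of_not_mem hi ha)]
    simpa [sum_insert ha, sum_congr rfl hq, add_left_comm, add_assoc] using
      h (Function.update q a k)

end EReal

theorem ConvexOn.finsetSum {𝕜 E β ι : Type*} [Semiring 𝕜] [PartialOrder 𝕜] [AddCommMonoid E]
    [AddCommMonoid β] [PartialOrder β] [IsOrderedAddMonoid β] [Module 𝕜 E] [Module 𝕜 β]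
    {s : Set E} {t : Finset ι} {f : ι → E → β} (hs : Convex 𝕜 s)
    (h : ∀ i ∈ t, ConvexOn 𝕜 s (f i)) : ConvexOn 𝕜 s fun x ↦ ∑ i ∈ t, f i x := by
  classical
  induction t using Finset.induction_on with
  | empty => simpa using convexOn_const (0 : β) hs
  | insert a t ha ih =>
    simp_rw [sum_insert ha]
    exact (h a (mem_insert_self a t)).add (ih fun i hi ↦ h i (mem_insert_of_mem hi))

theorem convexOn_perturbation {𝕜 E β ι : Type*} [Semiring 𝕜] [PartialOrder 𝕜] [AddCommMonoid E]
    [AddCommMonoid β] [PartialOrder β] [IsOrderedAddMonoid β] [Module 𝕜 E] [Module 𝕜 β]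
    [Fintype ι] {f₀ : E → β} {f : ι → E → β} (h₀ : ConvexOn 𝕜 univ f₀)
    (h : ∀ i, ConvexOn 𝕜 univ (f i)) :
    ConvexOn 𝕜 univ fun p : (ι → E) × E ↦ f₀ p.2 + ∑ i, f i (p.2 + p.1 i) :=
  (h₀.comp_linearMap (LinearMap.snd 𝕜 _ E)).add <| ConvexOn.finsetSum convex_univ fun i _ ↦
    (h i).comp_linearMap (LinearMap.snd 𝕜 _ E + LinearMap.proj i ∘ₗ LinearMap.fst 𝕜 (ι → E) E)

theorem exists_sum_dotProduct_eq {ι κ R : Type*} [Fintype ι] [Fintype κ] [CommSemiring R]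
    (ℓ : (ι → κ → R) →ₗ[R] R) : ∃ Y : ι → κ → R, ∀ u, ℓ u = ∑ i, Y i ⬝ᵥ u i := by
  classical
  refine ⟨fun i ↦ (dotProductEquiv R κ).symm (ℓ ∘ₗ LinearMap.single R (fun _ ↦ κ → R) i),
    fun u ↦ ?_⟩
  conv_lhs => rw [← Finset.univ_sum_single u]
  refine (map_sum ℓ _ _).trans (sum_congr rfl fun i _ ↦ ?_)
  exact (LinearMap.congr_fun ((dotProductEquiv R κ).apply_symm_apply
    (ℓ ∘ₗ LinearMap.single R (fun _ ↦ κ → R) i)) (u i)).symm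

theorem exists_continuousLinearMap_add_le_of_convexOn {U E : Type*} [NormedAddCommGroup U]
    [NormedSpace ℝ U] [FiniteDimensional ℝ U] [AddCommGroup E] [Module ℝ E] {g : U × E → ℝ}
    (hg : ConvexOn ℝ univ g) {v : ℝ} (hv : ∀ P, v ≤ g (0, P)) :
    ∃ ℓ : U →L[ℝ] ℝ, ∀ u P, v + ℓ u ≤ g (u, P) := by
  set C : Set (U × ℝ) := ⋃ P, {p | g (p.1, P) < p.2}
  have hC_open : IsOpen C := isOpen_iUnion fun P ↦ by
    have hP : ConvexOn ℝ univ fun u ↦ g (u, P) := by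
      simpa [Function.comp_def] using
        hg.comp_affineMap ((LinearMap.inl ℝ U E).toAffineMap + AffineMap.const ℝ U ((0 : U), P))
    have hcont := continuousOn_univ.1 (hP.continuousOn isOpen_univ)
    exact isOpen_lt (hcont.comp continuous_fst) continuous_snd
  have hC_convex : Convex ℝ C := by
    rintro ⟨u, t⟩ hut ⟨w, s⟩ hws a b ha hb hab
    simp only [C, mem_iUnion, mem_ofPred_eq] at hut hws ⊢
    obtain ⟨P, hP⟩ := hut
    obtain ⟨Q, hQ⟩ := hws
    have := hg.convex_strict_epigraph (show ((u, P), t) ∈ _ from ⟨trivial, hP⟩)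
      (show ((w, Q), s) ∈ _ from ⟨trivial, hQ⟩) ha hb hab
    exact ⟨a • P + b • Q, this.2⟩
  have h0 : ((0 : U), v) ∉ C := by
    simpa [C] using hv
  obtain ⟨f, hf⟩ := geometric_hahn_banach_open_point hC_convex hC_open h0
  set α := f (0, 1)
  have hf_apply : ∀ u t, f (u, t) = f (u, 0) + t * α := fun u t ↦ by
    rw [← smul_eq_mul, ← map_smul, ← map_add]
    simp
  have hf0 : f (0, 0) = 0 := map_zero f
  have hlt : ∀ u P t, g (u, P) < t → f (u, 0) + t * α < v * α := fun u P t ht ↦ by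
    have := hf (u, t) (mem_iUnion.2 ⟨P, ht⟩)
    rwa [hf_apply u t, hf_apply 0 v, hf0, zero_add] at this
  -- `(0, t) ∈ C` for all large `t`, so `f` decreases in `t`; rescaling to slope `-1` in `t` gives `ℓ`.
  have hα : α < 0 := by
    by_contra! hα
    have := hlt 0 0 (g (0, 0) + 1) (lt_add_one _)
    rw [hf0, zero_add] at this
    nlinarith [hv 0]
  refine ⟨(-α)⁻¹ • f.comp (ContinuousLinearMap.inl ℝ U ℝ), fun u P ↦ ?_⟩
  refine le_of_forall_gt_imp_ge_of_dense fun t ht ↦ ?_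
  have := hlt u P t ht
  change v + (-α)⁻¹ * f (u, 0) ≤ t
  rw [← le_sub_iff_add_le', inv_mul_le_iff₀ (neg_pos.2 hα)]
  nlinarith

theorem fenchelConj_eq_iSup_dotProduct {K : ℕ} (f : (Fin K → ℝ) → ℝ) (x : Fin K → ℝ) :
    fenchelConj f x = ⨆ p, ((x ⬝ᵥ p - f p : ℝ) : EReal) :=
  rfl

theorem le_fenchelConj {K : ℕ} (f : (Fin K → ℝ) → ℝ) (x p : Fin K → ℝ) :
    ((x ⬝ᵥ p - f p : ℝ) : EReal) ≤ fenchelConj f x :=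
  le_iSup (fun p ↦ ((x ⬝ᵥ p - f p : ℝ) : EReal)) p

section FenchelDuality

variable {K N : ℕ}

theorem neg_sum_le_fenchelConj_add_sum (F : Fin (N + 1) → (Fin K → ℝ) → ℝ)
    (X : Fin N → Fin K → ℝ) (P : Fin K → ℝ) :
    ((-∑ n, F n P : ℝ) : EReal) ≤
      fenchelConj (F 0) (∑ n, X n) + ∑ n : Fin N, fenchelConj (F n.succ) (-X n) := by
  have hsplit : -∑ n, F n P =
      ((∑ n, X n) ⬝ᵥ P - F 0 P) + ∑ n : Fin N, (-X n ⬝ᵥ P - F n.succ P) := by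
    simp only [Fin.sum_univ_succ, sum_dotProduct, neg_dotProduct, sum_sub_distrib,
      sum_neg_distrib]
    ring
  rw [hsplit, EReal.coe_add, EReal.coe_finsetSum]
  exact add_le_add (le_fenchelConj _ _ _) (sum_le_sum fun n _ ↦ le_fenchelConj _ _ _)

theorem exists_fenchelConj_add_sum_le {F : Fin (N + 1) → (Fin K → ℝ) → ℝ}
    (hconv : ∀ n, ConvexOn ℝ univ (F n)) {v : ℝ}
    (hv : ∀ P, v ≤ ∑ n, F n P) :
    ∃ X : Fin N → Fin K → ℝ,
      fenchelConj (F 0) (∑ n, X n) + ∑ n : Fin N, fenchelConj (F n.succ) (-X n) ≤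
        ((-v : ℝ) : EReal) := by
  have hg : ConvexOn ℝ univ fun p : (Fin N → Fin K → ℝ) × (Fin K → ℝ) ↦
      F 0 p.2 + ∑ n : Fin N, F n.succ (p.2 + p.1 n) :=
    convexOn_perturbation (hconv 0) fun n ↦ hconv n.succ
  obtain ⟨ℓ, hℓ⟩ := exists_continuousLinearMap_add_le_of_convexOn hg (v := v) fun P ↦ by
    simpa [Fin.sum_univ_succ] using hv P
  obtain ⟨Y, hY⟩ := exists_sum_dotProduct_eq (ℓ : (Fin N → Fin K → ℝ) →ₗ[ℝ] ℝ)
  refine ⟨fun n ↦ -Y n, ?_⟩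
  simp only [fenchelConj_eq_iSup_dotProduct]
  refine EReal.iSup_add_le fun P ↦ EReal.add_sum_iSup_le _ _ fun q ↦ ?_
  rw [← EReal.coe_finsetSum, ← EReal.coe_add, EReal.coe_le_coe_iff]
  have := hℓ (fun n ↦ q n - P) P
  rw [← ContinuousLinearMap.coe_coe, hY] at this
  simp only [dotProduct_sub, sum_sub_distrib, add_sub_cancel] at this
  simp only [sum_neg_distrib, neg_dotProduct, neg_neg, sum_dotProduct, sum_sub_distrib]
  linarith

theorem neg_iInf_fenchelConj_add_sum_eq_iInf {F : Fin (N + 1) → (Fin K → ℝ) → ℝ}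
    (hconv : ∀ n, ConvexOn ℝ univ (F n)) :
    -(⨅ X : Fin N → Fin K → ℝ,
        fenchelConj (F 0) (∑ n, X n) + ∑ n : Fin N, fenchelConj (F n.succ) (-X n)) =
      ⨅ P : Fin K → ℝ, ((∑ n, F n P : ℝ) : EReal) := by
  refine le_antisymm (le_iInf fun P ↦ EReal.neg_le.2 <| le_iInf fun X ↦ ?_) ?_
  · simpa using neg_sum_le_fenchelConj_add_sum F X P
  rw [EReal.le_neg]
  induction hJ : ⨅ P : Fin K → ℝ, ((∑ n, F n P : ℝ) : EReal) using EReal.rec with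
  | bot => simp
  | coe v =>
    have hv : ∀ P, v ≤ ∑ n, F n P := fun P ↦ EReal.coe_le_coe_iff.1 (hJ ▸ iInf_le _ P)
    obtain ⟨X, hX⟩ := exists_fenchelConj_add_sum_le hconv hv
    exact iInf_le_of_le X hX
  | top => exact absurd (hJ ▸ iInf_le _ 0) (EReal.coe_lt_top _).not_ge

end FenchelDuality

theorem stmt_11_general (K N : ℕ) (F : Fin (N + 1) → (Fin K → ℝ) → ℝ)
    (hconv : ∀ n, ConvexOn ℝ Set.univ (F n))
    (ρ : Fin N → (Fin K → ℝ) → EReal) (c : (Fin K → ℝ) → EReal)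
    (hρ : ∀ (n : Fin N) (X : Fin K → ℝ), ρ n X = fenchelConj (F n.succ) (-X))
    (hc : ∀ X : Fin K → ℝ, c X = fenchelConj (F 0) X) :
    -(⨅ X : Fin N → (Fin K → ℝ), c (∑ n, X n) + ∑ n : Fin N, ρ n (X n))
        ≤ ⨅ P : Fin K → ℝ, ((∑ n, F n P : ℝ) : EReal) ∧
    -(⨅ X : Fin N → (Fin K → ℝ), c (∑ n, X n) + ∑ n : Fin N, ρ n (X n))
        = ⨅ P : Fin K → ℝ, ((∑ n, F n P : ℝ) : EReal) := by
  simp only [hc, hρ]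
  have h := neg_iInf_fenchelConj_add_sum_eq_iInf hconv
  exact ⟨h.le, h⟩

/-- If agent `n`'s risk measure is `ρ_n(X) = F_n*(-X)` and the
market maker's pricing rule is `c = F₀*`, then the negated market global
objective `-min_{X₁,…,X_N} [c(Σ_n X_n) + Σ_n ρ_n(X_n)]` lower-bounds the primal
objective `min_P Σ_{n=0}^N F_n(P)`, with equality under strong Fenchel duality
(here guaranteed by the constraint qualification that the `F_n` are finite-valued
convex lower semicontinuous on all of `ℝ^K`). -/
theorem stmt_11 (K N : ℕ) (F : Fin (N + 1) → (Fin K → ℝ) → ℝ)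
    (hconv : ∀ n, ConvexOn ℝ Set.univ (F n))
    (hlsc : ∀ n, LowerSemicontinuous (F n))
    (ρ : Fin N → (Fin K → ℝ) → EReal) (c : (Fin K → ℝ) → EReal)
    (hρ : ∀ (n : Fin N) (X : Fin K → ℝ), ρ n X = fenchelConj (F n.succ) (-X))
    (hc : ∀ X : Fin K → ℝ, c X = fenchelConj (F 0) X) :
    -(⨅ X : Fin N → (Fin K → ℝ), c (∑ n, X n) + ∑ n : Fin N, ρ n (X n))
        ≤ ⨅ P : Fin K → ℝ, ((∑ n, F n P : ℝ) : EReal) ∧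
    -(⨅ X : Fin N → (Fin K → ℝ), c (∑ n, X n) + ∑ n : Fin N, ρ n (X n))
        = ⨅ P : Fin K → ℝ, ((∑ n, F n P : ℝ) : EReal) :=
  stmt_11_general K N F hconv ρ c hρ hc
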